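/- arXiv:0707.1243 — 2 statements merged into one kernel-verified Lean document; each statement's English description precedes it below -/
import Mathlib

section
/- Let d ≥ 1, l ∈ ℤ, and let S be a tempered distribution on ℝ^d for which there exist q ∈ ℕ and c₀ ≥ 0 with |⟨S,φ⟩| ≤ c₀ N_q(φ) for all φ ∈ 𝒮(ℝ^d). Let B be a bounded subset of 𝒢_l(ℝ^d). Then there exists c ≥ 0 such that for all π ∈ B, t ∈ (0,1] and x, y ∈ ℝ^d: |⟨S, π(t,x,·)⟩| ≤ c t^{−(d+l+q)/2}(1+‖x‖^q) and |⟨S, π(t,·,y)⟩| ≤ c t^{−(d+l+q)/2}(1+‖y‖^q). -/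
open MeasureTheory Real

noncomputable section

/-- `ℝ^d` with the Euclidean norm. -/
abbrev Eu (d : ℕ) := EuclideanSpace ℝ (Fin d)

/-- Iterated partial derivative along a list of coordinate directions. -/
noncomputable def pderivs {d : ℕ} : List (Fin d) → (Eu d → ℝ) → Eu d → ℝ
  | [], f => f
  | i :: l, f => pderivs l fun x => fderiv ℝ f x (EuclideanSpace.single i 1)

/-- The list of coordinates (with multiplicities) associated to a multi-index `m : ℕ^d`. -/
def mToList {d : ℕ} (m : Fin d → ℕ) : List (Fin d) :=
  (List.finRange d).flatMap fun i => List.replicate (m i) i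

/-- The partial derivative `∂^m` associated to a multi-index `m : ℕ^d`. -/
noncomputable def pderivM {d : ℕ} (m : Fin d → ℕ) (f : Eu d → ℝ) : Eu d → ℝ :=
  pderivs (mToList m) f

/-- The length `|m| = m₁ + ⋯ + m_d` of a multi-index. -/
def mlen {d : ℕ} (m : Fin d → ℕ) : ℕ := ∑ i, m i

/-- Mixed partial derivative `∂_x^α ∂_y^β f(x,y)` of a function of two `ℝ^d` variables. -/
noncomputable def D2 {d : ℕ} (α β : Fin d → ℕ) (f : Eu d → Eu d → ℝ) (x y : Eu d) : ℝ :=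
  pderivM α (fun x' => pderivM β (f x') y) x

/-- The Schwartz seminorm `N_q(φ) = Σ_{|α|≤q, |β|≤q} sup_x |x^α ∂^β φ(x)|`. -/
noncomputable def Nq (d q : ℕ) (φ : Eu d → ℝ) : ℝ :=
  ∑ α : Fin d → Fin (q + 1), ∑ β : Fin d → Fin (q + 1),
    if (∑ i, (α i : ℕ)) ≤ q ∧ (∑ i, (β i : ℕ)) ≤ q then
      ⨆ x : Eu d, |(∏ i, (x i) ^ ((α i : ℕ))) * pderivM (fun i => (β i : ℕ)) φ x|
    else 0


-- Auxiliary lemmas ------------------------------------------------------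

lemma pderivM_zero' {d : ℕ} (f : Eu d → ℝ) : pderivM (fun _ : Fin d => 0) f = f := by
  have : mToList (fun _ : Fin d => 0) = [] := by simp [mToList]
  rw [pderivM, this]; rfl

lemma mlen_zero' {d : ℕ} : mlen (fun _ : Fin d => 0) = 0 := by simp [mlen]

lemma D2_zl {d : ℕ} (β : Fin d → ℕ) (f : Eu d → Eu d → ℝ) (x y : Eu d) :
    D2 (fun _ => 0) β f x y = pderivM β (f x) y := by
  rw [D2, pderivM_zero']

lemma D2_zr {d : ℕ} (α : Fin d → ℕ) (f : Eu d → Eu d → ℝ) (x y : Eu d) :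
    D2 α (fun _ => 0) f x y = pderivM α (fun x' => f x' y) x := by
  rw [D2]; simp only [pderivM_zero']

lemma coord_le_norm' {d : ℕ} (z : Eu d) (i : Fin d) : |z i| ≤ ‖z‖ := by
  rw [EuclideanSpace.norm_eq]
  calc |z i| = Real.sqrt (‖z i‖^2) := by
        rw [Real.sqrt_sq (norm_nonneg _)]; simp [Real.norm_eq_abs]
    _ ≤ Real.sqrt (∑ j, ‖z j‖^2) := Real.sqrt_le_sqrt
        (Finset.single_le_sum (f := fun j => ‖z j‖^2) (fun j _ => by positivity)
          (Finset.mem_univ i))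

lemma sup_bound' {d : ℕ} (q : ℕ) (l : ℤ) (c1 c2 t E : ℝ) (hc1 : 0 ≤ c1) (hc2 : 0 < c2)
    (ht0 : 0 < t) (ht1 : t ≤ 1) (x : Eu d) (α : Fin d → ℕ) (hα : (∑ i, α i) ≤ q)
    (hE : -(((d + q : ℕ) : ℝ) + (l : ℝ)) / 2 ≤ E) (g : Eu d → ℝ)
    (hg : ∀ z, |g z| ≤ c1 * t ^ E * Real.exp (-c2 * ‖x - z‖ ^ 2 / t)) :
    (⨆ z : Eu d, |(∏ i, (z i) ^ (α i)) * g z|) ≤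
      c1 * Real.exp ((q : ℝ) ^ 2 / (4 * c2)) * 2 ^ q *
        t ^ (-(((d + q : ℕ) : ℝ) + (l : ℝ)) / 2) * (1 + ‖x‖ ^ q) := by
  have hT : (0:ℝ) < t ^ (-(((d + q : ℕ) : ℝ) + (l : ℝ)) / 2) := Real.rpow_pos_of_pos ht0 _
  have hxq : (0:ℝ) ≤ 1 + ‖x‖ ^ q := by positivity
  apply Real.iSup_le _ (by positivity)
  intro z
  have hr : (0:ℝ) ≤ ‖x - z‖ := norm_nonneg _
  set r := ‖x - z‖ with hrdef
  have hz1 : ∀ i, |z i| ≤ 1 + ‖z‖ := fun i =>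
    le_trans (coord_le_norm' z i) (by linarith [norm_nonneg z])
  have hp : |∏ i, (z i) ^ (α i)| ≤ (1 + ‖z‖) ^ q := by
    rw [Finset.abs_prod]
    calc ∏ i, |(z i) ^ (α i)| = ∏ i, |z i| ^ (α i) := by simp [abs_pow]
      _ ≤ ∏ i, (1 + ‖z‖) ^ (α i) :=
          Finset.prod_le_prod (fun i _ => by positivity)
            (fun i _ => pow_le_pow_left₀ (abs_nonneg _) (hz1 i) _)
      _ = (1 + ‖z‖) ^ (∑ i, α i) := by rw [Finset.prod_pow_eq_pow_sum]
      _ ≤ (1 + ‖z‖) ^ q := pow_le_pow_right₀ (by linarith [norm_nonneg z]) hα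
  have hzx : 1 + ‖z‖ ≤ (1 + ‖x‖) * (1 + r) := by
    have h1 : ‖z‖ - ‖x‖ ≤ ‖z - x‖ := norm_sub_norm_le z x
    have h2 : ‖z - x‖ = r := by rw [hrdef, norm_sub_rev]
    nlinarith [mul_nonneg (norm_nonneg x) hr]
  have hp2 : |∏ i, (z i) ^ (α i)| ≤ (1 + ‖x‖) ^ q * (1 + r) ^ q := by
    calc |∏ i, (z i) ^ (α i)| ≤ (1 + ‖z‖) ^ q := hp
      _ ≤ ((1 + ‖x‖) * (1 + r)) ^ q := pow_le_pow_left₀ (by linarith [norm_nonneg z]) hzx q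
      _ = (1 + ‖x‖) ^ q * (1 + r) ^ q := mul_pow _ _ _
  have h3 : (1 + r) ^ q * Real.exp (-c2 * r ^ 2 / t) ≤ Real.exp ((q : ℝ) ^ 2 / (4 * c2)) := by
    have e1 : (1 + r) ^ q ≤ Real.exp ((q : ℝ) * r) := by
      calc (1 + r) ^ q ≤ (Real.exp r) ^ q :=
            pow_le_pow_left₀ (by positivity) (by linarith [Real.add_one_le_exp r]) q
        _ = Real.exp ((q : ℝ) * r) := by rw [← Real.exp_nat_mul]
    have e2 : -c2 * r ^ 2 / t ≤ -c2 * r ^ 2 := by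
      rw [div_le_iff₀ ht0]
      nlinarith [mul_nonneg (mul_nonneg hc2.le (sq_nonneg r)) (sub_nonneg.2 ht1)]
    calc (1 + r) ^ q * Real.exp (-c2 * r ^ 2 / t)
        ≤ Real.exp ((q : ℝ) * r) * Real.exp (-c2 * r ^ 2) :=
          mul_le_mul e1 (Real.exp_le_exp.2 e2) (Real.exp_pos _).le (Real.exp_pos _).le
      _ = Real.exp ((q : ℝ) * r + -c2 * r ^ 2) := (Real.exp_add _ _).symm
      _ ≤ Real.exp ((q : ℝ) ^ 2 / (4 * c2)) := by
          apply Real.exp_le_exp.2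
          rw [le_div_iff₀ (by positivity : (0:ℝ) < 4 * c2)]
          nlinarith [sq_nonneg (2 * c2 * r - (q : ℝ))]
  have h2 : t ^ E ≤ t ^ (-(((d + q : ℕ) : ℝ) + (l : ℝ)) / 2) :=
    Real.rpow_le_rpow_of_exponent_ge ht0 ht1 hE
  have h4 : (1 + ‖x‖) ^ q ≤ 2 ^ q * (1 + ‖x‖ ^ q) := by
    rcases le_total ‖x‖ 1 with h | h
    · have : (1 + ‖x‖) ^ q ≤ 2 ^ q := pow_le_pow_left₀ (by positivity) (by linarith) q
      have h2q : (0:ℝ) ≤ 2 ^ q := by positivity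
      nlinarith [pow_nonneg (norm_nonneg x) q]
    · have : (1 + ‖x‖) ^ q ≤ (2 * ‖x‖) ^ q := pow_le_pow_left₀ (by positivity) (by linarith) q
      have h2q : (0:ℝ) ≤ (2:ℝ) ^ q := by positivity
      calc (1 + ‖x‖) ^ q ≤ (2 * ‖x‖) ^ q := this
        _ = 2 ^ q * ‖x‖ ^ q := mul_pow _ _ _
        _ ≤ 2 ^ q * (1 + ‖x‖ ^ q) := by nlinarith [pow_nonneg (norm_nonneg x) q]
  have htE : (0:ℝ) ≤ t ^ E := (Real.rpow_pos_of_pos ht0 _).le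
  calc |(∏ i, (z i) ^ (α i)) * g z| = |∏ i, (z i) ^ (α i)| * |g z| := abs_mul _ _
    _ ≤ ((1 + ‖x‖) ^ q * (1 + r) ^ q) * (c1 * t ^ E * Real.exp (-c2 * r ^ 2 / t)) :=
        mul_le_mul hp2 (hg z) (abs_nonneg _) (by positivity)
    _ = c1 * ((1 + r) ^ q * Real.exp (-c2 * r ^ 2 / t)) * t ^ E * (1 + ‖x‖) ^ q := by ring
    _ ≤ c1 * Real.exp ((q : ℝ) ^ 2 / (4 * c2)) * t ^ (-(((d + q : ℕ) : ℝ) + (l : ℝ)) / 2) *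
          (2 ^ q * (1 + ‖x‖ ^ q)) := by
        apply mul_le_mul _ h4 (by positivity) (by positivity)
        apply mul_le_mul _ h2 htE (by positivity)
        exact mul_le_mul_of_nonneg_left h3 hc1
    _ = c1 * Real.exp ((q : ℝ) ^ 2 / (4 * c2)) * 2 ^ q *
          t ^ (-(((d + q : ℕ) : ℝ) + (l : ℝ)) / 2) * (1 + ‖x‖ ^ q) := by ring

/-- If `S` is a tempered distribution of order `≤ q` (i.e. `|⟨S,φ⟩| ≤ c₀ N_q(φ)`) and `B` is a
bounded subset of `𝒢_l(ℝ^d)`, then `|⟨S, π(t,x,·)⟩| ≤ c t^{-(d+l+q)/2}(1+‖x‖^q)` and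
`|⟨S, π(t,·,y)⟩| ≤ c t^{-(d+l+q)/2}(1+‖y‖^q)` uniformly over `π ∈ B`. -/
theorem statement4 (d : ℕ) (hd : 1 ≤ d) (l : ℤ) (q : ℕ) (c₀ : ℝ) (hc₀ : 0 ≤ c₀)
    (S : SchwartzMap (Eu d) ℝ →L[ℝ] ℝ)
    (hS : ∀ φ : SchwartzMap (Eu d) ℝ, |S φ| ≤ c₀ * Nq d q (fun x => φ x))
    (B : Set (ℝ → Eu d → Eu d → ℝ))
    (hmeas : ∀ P ∈ B, Measurable fun p : ℝ × Eu d × Eu d => P p.1 p.2.1 p.2.2)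
    (hsmooth : ∀ P ∈ B, ∀ t ∈ Set.Ioc (0:ℝ) 1,
      ContDiff ℝ (⊤ : ℕ∞) fun p : Eu d × Eu d => P t p.1 p.2)
    -- `B` is a bounded subset of `𝒢_l(ℝ^d)`
    (hG : ∀ α β : Fin d → ℕ, ∃ c₁ ≥ (0:ℝ), ∃ c₂ > (0:ℝ), ∀ P ∈ B,
      ∀ t ∈ Set.Ioc (0:ℝ) 1, ∀ x y : Eu d,
        |D2 α β (P t) x y| ≤
          c₁ * t ^ (-(((mlen α + mlen β + d : ℕ) : ℝ) + (l : ℝ)) / 2) *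
            Real.exp (-c₂ * ‖x - y‖ ^ 2 / t)) :
    ∃ c ≥ (0:ℝ), ∀ P ∈ B, ∀ t ∈ Set.Ioc (0:ℝ) 1, ∀ x y : Eu d,
      (∀ φ : SchwartzMap (Eu d) ℝ, (∀ z, φ z = P t x z) →
        |S φ| ≤ c * t ^ (-(((d + q : ℕ) : ℝ) + (l : ℝ)) / 2) * (1 + ‖x‖ ^ q)) ∧
      (∀ ψ : SchwartzMap (Eu d) ℝ, (∀ z, ψ z = P t z y) →
        |S ψ| ≤ c * t ^ (-(((d + q : ℕ) : ℝ) + (l : ℝ)) / 2) * (1 + ‖y‖ ^ q)) := by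
  classical
  choose c1 hc1 c2 hc2 hbd using hG
  set z0 : Fin d → ℕ := fun _ => 0 with hz0
  set F : (Fin d → Fin (q + 1)) → ℝ := fun β =>
    c1 z0 (fun i => (β i : ℕ)) *
        Real.exp ((q : ℝ) ^ 2 / (4 * c2 z0 (fun i => (β i : ℕ)))) * 2 ^ q +
      c1 (fun i => (β i : ℕ)) z0 *
        Real.exp ((q : ℝ) ^ 2 / (4 * c2 (fun i => (β i : ℕ)) z0)) * 2 ^ q with hF
  have hFnn : ∀ β, 0 ≤ F β := by
    intro β
    have h1 := hc1 z0 (fun i => (β i : ℕ))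
    have h2 := hc1 (fun i => (β i : ℕ)) z0
    positivity
  set K : ℝ := ∑ _A : Fin d → Fin (q + 1), ∑ β : Fin d → Fin (q + 1), F β with hK
  have hKnn : 0 ≤ K := Finset.sum_nonneg fun _ _ => Finset.sum_nonneg fun β _ => hFnn β
  refine ⟨c₀ * K, mul_nonneg hc₀ hKnn, ?_⟩
  intro P hP t ht x y
  obtain ⟨ht0, ht1⟩ := ht
  have hTnn : (0:ℝ) ≤ t ^ (-(((d + q : ℕ) : ℝ) + (l : ℝ)) / 2) :=
    (Real.rpow_pos_of_pos ht0 _).le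
  have key : ∀ w : Eu d, ∀ g : Eu d → ℝ, ∀ C cc : (Fin d → ℕ) → ℝ, ∀ E : (Fin d → ℕ) → ℝ,
      (∀ β, 0 ≤ C β) → (∀ β, 0 < cc β) →
      (∀ β : Fin d → Fin (q + 1),
        C (fun i => (β i : ℕ)) * Real.exp ((q : ℝ) ^ 2 / (4 * cc (fun i => (β i : ℕ)))) * 2 ^ q
          ≤ F β) →
      (∀ β : Fin d → ℕ, (∑ i, β i) ≤ q →
        -(((d + q : ℕ) : ℝ) + (l : ℝ)) / 2 ≤ E β) →
      (∀ β : Fin d → ℕ, (∑ i, β i) ≤ q → ∀ z, |pderivM β g z| ≤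
        C β * t ^ E β * Real.exp (-cc β * ‖w - z‖ ^ 2 / t)) →
      Nq d q g ≤ K * t ^ (-(((d + q : ℕ) : ℝ) + (l : ℝ)) / 2) * (1 + ‖w‖ ^ q) := by
    intro w g C cc E hC hcc hCF hE hg
    rw [Nq, hK, Finset.sum_mul, Finset.sum_mul]
    apply Finset.sum_le_sum
    intro A _
    rw [Finset.sum_mul, Finset.sum_mul]
    apply Finset.sum_le_sum
    intro β _
    have hFterm : 0 ≤ F β * t ^ (-(((d + q : ℕ) : ℝ) + (l : ℝ)) / 2) * (1 + ‖w‖ ^ q) := by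
      have := hFnn β
      positivity
    by_cases hcond : (∑ i, (A i : ℕ)) ≤ q ∧ (∑ i, (β i : ℕ)) ≤ q
    · rw [if_pos hcond]
      set β' : Fin d → ℕ := fun i => (β i : ℕ) with hβ'
      have hb := sup_bound' (d := d) q l (C β') (cc β') t (E β')
        (hC β') (hcc β') ht0 ht1 w (fun i => (A i : ℕ)) hcond.1 (hE β' hcond.2)
        (pderivM β' g) (hg β' hcond.2)
      refine le_trans hb ?_
      have hx2 : (0:ℝ) ≤ 1 + ‖w‖ ^ q := by positivity
      exact mul_le_mul_of_nonneg_right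
        (mul_le_mul_of_nonneg_right (hCF β) hTnn) hx2
    · rw [if_neg hcond]
      exact hFterm
  have hEx : ∀ β : Fin d → ℕ, (∑ i, β i) ≤ q →
      -(((d + q : ℕ) : ℝ) + (l : ℝ)) / 2 ≤
        -(((mlen z0 + mlen β + d : ℕ) : ℝ) + (l : ℝ)) / 2 := by
    intro β hβ
    have hmb : mlen β ≤ q := hβ
    have hle : (mlen z0 + mlen β + d) ≤ d + q := by rw [mlen_zero']; omega
    have := (Nat.cast_le (α := ℝ)).2 hle
    linarith
  have hEy : ∀ β : Fin d → ℕ, (∑ i, β i) ≤ q →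
      -(((d + q : ℕ) : ℝ) + (l : ℝ)) / 2 ≤
        -(((mlen β + mlen z0 + d : ℕ) : ℝ) + (l : ℝ)) / 2 := by
    intro β hβ
    have hmb : mlen β ≤ q := hβ
    have hle : (mlen β + mlen z0 + d) ≤ d + q := by rw [mlen_zero']; omega
    have := (Nat.cast_le (α := ℝ)).2 hle
    linarith
  constructor
  · intro φ hφ
    have hφf : (fun z => φ z) = P t x := funext hφ
    have hNq : Nq d q (P t x) ≤
        K * t ^ (-(((d + q : ℕ) : ℝ) + (l : ℝ)) / 2) * (1 + ‖x‖ ^ q) := by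
      apply key x (P t x) (fun β => c1 z0 β) (fun β => c2 z0 β)
        (fun β => -(((mlen z0 + mlen β + d : ℕ) : ℝ) + (l : ℝ)) / 2)
        (fun β => hc1 z0 β) (fun β => hc2 z0 β) ?_ hEx ?_
      · intro β
        have h2 := hc1 (fun i => (β i : ℕ)) z0
        have hpos : (0:ℝ) ≤ c1 (fun i => (β i : ℕ)) z0 *
            Real.exp ((q : ℝ) ^ 2 / (4 * c2 (fun i => (β i : ℕ)) z0)) * 2 ^ q := by positivity
        rw [hF]; dsimp only; linarith
      · intro β hβ z
        rw [← D2_zl]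
        exact hbd z0 β P hP t ⟨ht0, ht1⟩ x z
    calc |S φ| ≤ c₀ * Nq d q (fun z => φ z) := hS φ
      _ = c₀ * Nq d q (P t x) := by rw [hφf]
      _ ≤ c₀ * (K * t ^ (-(((d + q : ℕ) : ℝ) + (l : ℝ)) / 2) * (1 + ‖x‖ ^ q)) :=
          mul_le_mul_of_nonneg_left hNq hc₀
      _ = c₀ * K * t ^ (-(((d + q : ℕ) : ℝ) + (l : ℝ)) / 2) * (1 + ‖x‖ ^ q) := by ring
  · intro ψ hψ
    have hψf : (fun z => ψ z) = fun z => P t z y := funext hψ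
    have hNq : Nq d q (fun z => P t z y) ≤
        K * t ^ (-(((d + q : ℕ) : ℝ) + (l : ℝ)) / 2) * (1 + ‖y‖ ^ q) := by
      apply key y (fun z => P t z y) (fun β => c1 β z0) (fun β => c2 β z0)
        (fun β => -(((mlen β + mlen z0 + d : ℕ) : ℝ) + (l : ℝ)) / 2)
        (fun β => hc1 β z0) (fun β => hc2 β z0) ?_ hEy ?_
      · intro β
        have h1 := hc1 z0 (fun i => (β i : ℕ))
        have hpos : (0:ℝ) ≤ c1 z0 (fun i => (β i : ℕ)) *
            Real.exp ((q : ℝ) ^ 2 / (4 * c2 z0 (fun i => (β i : ℕ)))) * 2 ^ q := by positivity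
        rw [hF]; dsimp only; linarith
      · intro β hβ z
        rw [← D2_zr, norm_sub_rev]
        exact hbd β z0 P hP t ⟨ht0, ht1⟩ z y
    calc |S ψ| ≤ c₀ * Nq d q (fun z => ψ z) := hS ψ
      _ = c₀ * Nq d q (fun z => P t z y) := by rw [hψf]
      _ ≤ c₀ * (K * t ^ (-(((d + q : ℕ) : ℝ) + (l : ℝ)) / 2) * (1 + ‖y‖ ^ q)) :=
          mul_le_mul_of_nonneg_left hNq hc₀
      _ = c₀ * K * t ^ (-(((d + q : ℕ) : ℝ) + (l : ℝ)) / 2) * (1 + ‖y‖ ^ q) := by ring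
end
end

section
/- Let d ≥ 1, l ∈ ℤ, and let B be a bounded subset of 𝓗_l(ℝ^d). For ρ ∈ B and n ≥ 1 define π_{ρ,n}(t,x,y) = (1/n) Σ_{k ≥ 1, k/n < t} ρ(k/n, t, x, y) for t ∈ (0,1] and x, y ∈ ℝ^d. Then {π_{ρ,n} : ρ ∈ B, n ≥ 1} is a bounded subset of 𝒢_{l−2}(ℝ^d): each π_{ρ,n}(t,·,·) is infinitely differentiable, and for every pair of multi-indices α, β ∈ ℕ^d there exist c₁ ≥ 0 and c₂ > 0, independent of ρ ∈ B and n ≥ 1, such that |∂_x^α ∂_y^β π_{ρ,n}(t,x,y)| ≤ c₁ t^{−(|α|+|β|+d+l−2)/2} exp(−c₂‖x−y‖²/t) for all t ∈ (0,1] and x, y ∈ ℝ^d. -/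
open MeasureTheory Real

noncomputable section

/-- The Riemann sum `π_{ρ,n}(t,x,y) = (1/n) Σ_{k ≥ 1, k/n < t} ρ(k/n,t,x,y)`. -/
noncomputable def riemannSum {d : ℕ} (ρ : ℝ → ℝ → Eu d → Eu d → ℝ) (n : ℕ)
    (t : ℝ) (x y : Eu d) : ℝ :=
  (1 / (n : ℝ)) * ∑ k ∈ Finset.Ioc 0 n, if (k : ℝ) / n < t then ρ ((k : ℝ) / n) t x y else 0

/-! Differentiation commutes with the finite sum defining `π_{ρ,n}`, so `∂_x^α ∂_y^β π_{ρ,n}` is the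
Riemann sum of the derivatives of the `ρ(k/n, t)`, each of which obeys the Gaussian bound of
`𝓗_l`. Only the nodes `k/n < t` contribute, at most `n t` of them with weight `1/n`, so the sum
gains a factor `t = t^{2/2}`: this is the shift from `l` to `l - 2`. -/

theorem ContDiff.fderiv_apply_const {E F : Type*} [NormedAddCommGroup E] [NormedSpace ℝ E]
    [NormedAddCommGroup F] [NormedSpace ℝ F] {f : E → F} (hf : ContDiff ℝ (⊤ : ℕ∞) f) (v : E) :
    ContDiff ℝ (⊤ : ℕ∞) fun x => fderiv ℝ f x v :=
  (hf.fderiv_right (by exact_mod_cast le_top)).clm_apply contDiff_const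

theorem pderivs_const_mul_sum {d : ℕ} (L : List (Fin d)) {ι : Type*} (s : Finset ι)
    (f : ι → Eu d → ℝ) (c : ℝ) (hf : ∀ k ∈ s, ContDiff ℝ (⊤ : ℕ∞) (f k)) (x : Eu d) :
    pderivs L (fun x => c * ∑ k ∈ s, f k x) x = c * ∑ k ∈ s, pderivs L (f k) x := by
  induction L generalizing f with
  | nil => rfl
  | cons i L ih =>
    have hdiff : ∀ z, ∀ k ∈ s, DifferentiableAt ℝ (f k) z := fun z k hk =>
      ((hf k hk).differentiable (by simp)).differentiableAt
    have hfderiv : (fun z => fderiv ℝ (fun x => c * ∑ k ∈ s, f k x) z (EuclideanSpace.single i 1))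
        = fun z => c * ∑ k ∈ s, fderiv ℝ (f k) z (EuclideanSpace.single i 1) := by
      funext z
      rw [fderiv_const_mul (DifferentiableAt.fun_sum (hdiff z)), fderiv_fun_sum (hdiff z)]
      simp
    exact (congrArg (pderivs L · x) hfderiv).trans
      (ih _ fun k hk => (hf k hk).fderiv_apply_const _)

theorem contDiff_pderivs_snd {d : ℕ} (L : List (Fin d)) (H : Eu d × Eu d → ℝ)
    (hH : ContDiff ℝ (⊤ : ℕ∞) H) :
    ContDiff ℝ (⊤ : ℕ∞) fun p : Eu d × Eu d => pderivs L (fun y => H (p.1, y)) p.2 := by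
  induction L generalizing H with
  | nil => exact hH
  | cons i L ih =>
    set K : Eu d × Eu d → ℝ := fun p => fderiv ℝ H p (0, EuclideanSpace.single i 1)
    have hpartial : ∀ x : Eu d,
        (fun y => fderiv ℝ (fun y' => H (x, y')) y (EuclideanSpace.single i 1))
          = fun y => K (x, y) := by
      intro x
      funext y
      have hcomp : HasFDerivAt (fun y' => H (x, y'))
          ((fderiv ℝ H (x, y)).comp (ContinuousLinearMap.inr ℝ (Eu d) (Eu d))) y :=
        (hH.differentiable (by simp) (x, y)).hasFDerivAt.comp y (hasFDerivAt_prodMk_right x y)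
      rw [hcomp.fderiv]
      rfl
    simpa only [pderivs, hpartial] using ih K (hH.fderiv_apply_const _)

theorem D2_const_mul_sum {d : ℕ} (α β : Fin d → ℕ) {ι : Type*} (s : Finset ι)
    (F : ι → Eu d → Eu d → ℝ) (c : ℝ)
    (hF : ∀ k ∈ s, ContDiff ℝ (⊤ : ℕ∞) fun p : Eu d × Eu d => F k p.1 p.2) (x y : Eu d) :
    D2 α β (fun x y => c * ∑ k ∈ s, F k x y) x y = c * ∑ k ∈ s, D2 α β (F k) x y := by
  have hinner : (fun x' => pderivM β (fun y => c * ∑ k ∈ s, F k x' y) y)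
      = fun x' => c * ∑ k ∈ s, pderivM β (F k x') y := by
    funext x'
    exact pderivs_const_mul_sum _ s (fun k => F k x') c
      (fun k hk => (hF k hk).comp (contDiff_const.prodMk contDiff_id)) y
  rw [D2, hinner]
  exact pderivs_const_mul_sum _ s _ c (fun k hk =>
    (contDiff_pderivs_snd (mToList β) _ (hF k hk)).comp (contDiff_id.prodMk contDiff_const)) x

def riemannNodes (n : ℕ) (t : ℝ) : Finset ℕ :=
  (Finset.Ioc 0 n).filter fun k => (k : ℝ) / n < t

theorem div_mem_Ioo_of_mem_riemannNodes {n k : ℕ} {t : ℝ} (hk : k ∈ riemannNodes n t) :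
    (k : ℝ) / n ∈ Set.Ioo 0 t := by
  obtain ⟨hkn, hkt⟩ := Finset.mem_filter.mp hk
  obtain ⟨hk0, hkn⟩ := Finset.mem_Ioc.mp hkn
  exact ⟨div_pos (by exact_mod_cast hk0) (by exact_mod_cast hk0.trans_le hkn), hkt⟩

theorem card_riemannNodes_le {t : ℝ} (ht : 0 ≤ t) (n : ℕ) :
    ((riemannNodes n t).card : ℝ) ≤ n * t := by
  have hsub : riemannNodes n t ⊆ Finset.Icc 1 ⌊(n : ℝ) * t⌋₊ := by
    intro k hk
    obtain ⟨hkn, hkt⟩ := Finset.mem_filter.mp hk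
    obtain ⟨hk0, hkn⟩ := Finset.mem_Ioc.mp hkn
    have hn : (0 : ℝ) < n := by exact_mod_cast hk0.trans_le hkn
    refine Finset.mem_Icc.mpr ⟨hk0, Nat.le_floor ?_⟩
    rw [div_lt_iff₀ hn] at hkt
    linarith
  calc ((riemannNodes n t).card : ℝ) ≤ (Finset.Icc 1 ⌊(n : ℝ) * t⌋₊).card := by
        exact_mod_cast Finset.card_le_card hsub
    _ = ⌊(n : ℝ) * t⌋₊ := by simp
    _ ≤ n * t := Nat.floor_le (by positivity)

theorem riemannSum_eq_sum_riemannNodes {d : ℕ} (ρ : ℝ → ℝ → Eu d → Eu d → ℝ) (n : ℕ)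
    (t : ℝ) : riemannSum ρ n t = fun x y => 1 / (n : ℝ) * ∑ k ∈ riemannNodes n t, ρ (k / n) t x y := by
  funext x y
  rw [riemannSum, riemannNodes, Finset.sum_filter]

theorem abs_inv_mul_sum_riemannNodes_le {n : ℕ} {t M : ℝ} (ht : 0 ≤ t) (hM : 0 ≤ M)
    (f : ℕ → ℝ) (hf : ∀ k ∈ riemannNodes n t, |f k| ≤ M) :
    |1 / (n : ℝ) * ∑ k ∈ riemannNodes n t, f k| ≤ t * M := by
  have hcard : 1 / (n : ℝ) * (riemannNodes n t).card ≤ t := by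
    rcases n.eq_zero_or_pos with rfl | hn
    · simpa using ht
    · rw [one_div_mul_eq_div, div_le_iff₀ (by exact_mod_cast hn), mul_comm]
      exact card_riemannNodes_le ht n
  calc |1 / (n : ℝ) * ∑ k ∈ riemannNodes n t, f k|
      ≤ 1 / (n : ℝ) * ∑ k ∈ riemannNodes n t, |f k| := by
        rw [abs_mul, abs_of_nonneg (by positivity)]
        gcongr
        exact Finset.abs_sum_le_sum_abs _ _
    _ ≤ 1 / (n : ℝ) * ((riemannNodes n t).card * M) := by
        gcongr
        simpa using Finset.sum_le_sum hf
    _ ≤ t * M := by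
        rw [← mul_assoc]
        gcongr

theorem statement11_general (d : ℕ) (l : ℤ)
    (B : Set (ℝ → ℝ → Eu d → Eu d → ℝ))
    (hsm : ∀ ρ ∈ B, ∀ s t : ℝ, 0 < s → s < t → t ≤ 1 →
      ContDiff ℝ (⊤ : ℕ∞) fun p : Eu d × Eu d => ρ s t p.1 p.2)
    -- `B` is a bounded subset of `𝓗_l(ℝ^d)`
    (hb : ∀ α β : Fin d → ℕ, ∃ c₁ ≥ (0:ℝ), ∃ c₂ > (0:ℝ), ∀ ρ ∈ B,
      ∀ s t : ℝ, 0 < s → s < t → t ≤ 1 → ∀ x y : Eu d,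
        |D2 α β (ρ s t) x y| ≤
          c₁ * t ^ (-(((mlen α + mlen β + d : ℕ) : ℝ) + (l : ℝ)) / 2) *
            Real.exp (-c₂ * ‖x - y‖ ^ 2 / t)) :
    -- conclusion: `{π_{ρ,n} | ρ ∈ B, n ≥ 1}` is a bounded subset of `𝒢_{l-2}(ℝ^d)`
    (∀ ρ ∈ B, ∀ n : ℕ, 1 ≤ n → ∀ t ∈ Set.Ioc (0:ℝ) 1,
      ContDiff ℝ (⊤ : ℕ∞) fun p : Eu d × Eu d => riemannSum ρ n t p.1 p.2) ∧
    (∀ α β : Fin d → ℕ, ∃ c₁ ≥ (0:ℝ), ∃ c₂ > (0:ℝ), ∀ ρ ∈ B, ∀ n : ℕ, 1 ≤ n →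
      ∀ t ∈ Set.Ioc (0:ℝ) 1, ∀ x y : Eu d,
        |D2 α β (riemannSum ρ n t) x y| ≤
          c₁ * t ^ (-(((mlen α + mlen β + d : ℕ) : ℝ) + (l : ℝ) - 2) / 2) *
            Real.exp (-c₂ * ‖x - y‖ ^ 2 / t)) := by
  have hnode : ∀ ρ ∈ B, ∀ n : ℕ, ∀ t ∈ Set.Ioc (0:ℝ) 1, ∀ k ∈ riemannNodes n t,
      ContDiff ℝ (⊤ : ℕ∞) fun p : Eu d × Eu d => ρ (k / n) t p.1 p.2 := fun ρ hρ n t ht k hk =>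
    hsm ρ hρ _ t (div_mem_Ioo_of_mem_riemannNodes hk).1 (div_mem_Ioo_of_mem_riemannNodes hk).2 ht.2
  refine ⟨fun ρ hρ n _ t ht => ?_, fun α β => ?_⟩
  · rw [riemannSum_eq_sum_riemannNodes]
    exact contDiff_const.mul (ContDiff.sum (hnode ρ hρ n t ht))
  obtain ⟨c₁, hc₁, c₂, hc₂, hbd⟩ := hb α β
  refine ⟨c₁, hc₁, c₂, hc₂, fun ρ hρ n _ t ht x y => ?_⟩
  have ht0 := ht.1
  set N : ℝ := ((mlen α + mlen β + d : ℕ) : ℝ)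
  rw [riemannSum_eq_sum_riemannNodes, D2_const_mul_sum α β _ _ _ (hnode ρ hρ n t ht)]
  calc _ ≤ t * (c₁ * t ^ (-(N + l) / 2) * Real.exp (-c₂ * ‖x - y‖ ^ 2 / t)) :=
        abs_inv_mul_sum_riemannNodes_le ht0.le (by positivity) _ fun k hk =>
          hbd ρ hρ _ t (div_mem_Ioo_of_mem_riemannNodes hk).1
            (div_mem_Ioo_of_mem_riemannNodes hk).2 ht.2 x y
    _ = c₁ * t ^ (-(N + l - 2) / 2) * Real.exp (-c₂ * ‖x - y‖ ^ 2 / t) := by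
        rw [show -(N + l - 2) / 2 = 1 + -(N + l) / 2 by ring, Real.rpow_add ht0, Real.rpow_one]
        ring

/-- Riemann sums `(1/n) Σ_{k/n < t} ρ(k/n,t,·,·)` over a bounded subset of `𝓗_l(ℝ^d)` form a
bounded subset of `𝒢_{l-2}(ℝ^d)`, uniformly in `n ≥ 1`. -/
theorem statement11 (d : ℕ) (hd : 1 ≤ d) (l : ℤ)
    (B : Set (ℝ → ℝ → Eu d → Eu d → ℝ))
    (hmeas : ∀ ρ ∈ B, Measurable fun p : (ℝ × ℝ) × Eu d × Eu d => ρ p.1.1 p.1.2 p.2.1 p.2.2)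
    (hsm : ∀ ρ ∈ B, ∀ s t : ℝ, 0 < s → s < t → t ≤ 1 →
      ContDiff ℝ (⊤ : ℕ∞) fun p : Eu d × Eu d => ρ s t p.1 p.2)
    -- `B` is a bounded subset of `𝓗_l(ℝ^d)`
    (hb : ∀ α β : Fin d → ℕ, ∃ c₁ ≥ (0:ℝ), ∃ c₂ > (0:ℝ), ∀ ρ ∈ B,
      ∀ s t : ℝ, 0 < s → s < t → t ≤ 1 → ∀ x y : Eu d,
        |D2 α β (ρ s t) x y| ≤
          c₁ * t ^ (-(((mlen α + mlen β + d : ℕ) : ℝ) + (l : ℝ)) / 2) *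
            Real.exp (-c₂ * ‖x - y‖ ^ 2 / t)) :
    -- conclusion: `{π_{ρ,n} | ρ ∈ B, n ≥ 1}` is a bounded subset of `𝒢_{l-2}(ℝ^d)`
    (∀ ρ ∈ B, ∀ n : ℕ, 1 ≤ n → ∀ t ∈ Set.Ioc (0:ℝ) 1,
      ContDiff ℝ (⊤ : ℕ∞) fun p : Eu d × Eu d => riemannSum ρ n t p.1 p.2) ∧
    (∀ α β : Fin d → ℕ, ∃ c₁ ≥ (0:ℝ), ∃ c₂ > (0:ℝ), ∀ ρ ∈ B, ∀ n : ℕ, 1 ≤ n →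
      ∀ t ∈ Set.Ioc (0:ℝ) 1, ∀ x y : Eu d,
        |D2 α β (riemannSum ρ n t) x y| ≤
          c₁ * t ^ (-(((mlen α + mlen β + d : ℕ) : ℝ) + (l : ℝ) - 2) / 2) *
            Real.exp (-c₂ * ‖x - y‖ ^ 2 / t)) :=
  statement11_general d l B hsm hb
end
end
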